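/- arXiv:2512.22318 — 6 statements merged into one kernel-verified Lean document; each statement's English description precedes it below -/
import Mathlib

section
/- Let E and R be types, T = E × R × E the type of knowledge-graph triples, freq : E → ℕ, g : ℕ → ℝ, f : ℝ × ℝ → ℝ, and let U be the relation-agnostic uncertainty estimator U(h, r, t) = f(g(freq h), g(freq t)). Let D_novel and D_ID be finite nonempty sets of triples. If there exists a bijection φ : D_novel → D_ID such that for every x = (h, r, t) ∈ D_novel with φ(x) = (h', r', t') one has freq h = freq h' and freq t = freq t', then the tie-corrected AUROC satisfies AUROC½(U, D_novel, D_ID) = 1/2. -/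
open Finset

/-- Strict AUROC: `(1/(|O|·|I|)) · ∑_{x ∈ O} ∑_{y ∈ I} 1[U x > U y]`. -/
noncomputable def aurocStrict {T : Type*} (U : T → ℝ) (O I : Finset T) : ℝ :=
  (1 / ((O.card : ℝ) * (I.card : ℝ))) *
    ∑ x ∈ O, ∑ y ∈ I, (if U x > U y then (1 : ℝ) else 0)

/-- Tie-corrected AUROC:
`(1/(|O|·|I|)) · ∑_{x ∈ O} ∑_{y ∈ I} (1[U x > U y] + (1/2)·1[U x = U y])`. -/
noncomputable def aurocHalf {T : Type*} (U : T → ℝ) (O I : Finset T) : ℝ :=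
  (1 / ((O.card : ℝ) * (I.card : ℝ))) *
    ∑ x ∈ O, ∑ y ∈ I,
      ((if U x > U y then (1 : ℝ) else 0) + (1 / 2) * (if U x = U y then (1 : ℝ) else 0))

/-!
The tie-corrected pairwise score `s(a, b) = 1[a > b] + ½·1[a = b]` satisfies
`s(a, b) + s(b, a) = 1`, so averaging it over all ordered pairs of a single sample gives
exactly `1/2`. A bijection `D_novel → D_ID` matching head and tail frequencies preserves a
relation-agnostic score, so reindexing the in-distribution sample along it turns
`AUROC½(U, D_novel, D_ID)` into `AUROC½(U, D_novel, D_novel) = 1/2`.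
-/

noncomputable def tieScore (a b : ℝ) : ℝ :=
  (if a > b then 1 else 0) + 1 / 2 * (if a = b then 1 else 0)

lemma tieScore_add_tieScore_swap (a b : ℝ) : tieScore a b + tieScore b a = 1 := by
  rcases lt_trichotomy a b with h | rfl | h
  · simp [tieScore, h, h.ne, h.ne', not_lt.2 h.le]
  · norm_num [tieScore]
  · simp [tieScore, h, h.ne, h.ne', not_lt.2 h.le]

section

variable {T : Type*} (U : T → ℝ)

lemma aurocHalf_eq_sum_tieScore (O I : Finset T) :
    aurocHalf U O I = 1 / (#O * #I : ℝ) * ∑ x ∈ O, ∑ y ∈ I, tieScore (U x) (U y) :=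
  rfl

lemma sum_sum_tieScore_self (S : Finset T) :
    ∑ x ∈ S, ∑ y ∈ S, tieScore (U x) (U y) = (#S : ℝ) ^ 2 / 2 := by
  have hsymm : 2 * ∑ x ∈ S, ∑ y ∈ S, tieScore (U x) (U y) =
      ∑ x ∈ S, ∑ y ∈ S, (tieScore (U x) (U y) + tieScore (U y) (U x)) := by
    rw [two_mul]
    nth_rewrite 2 [sum_comm]
    simp only [← sum_add_distrib]
  simp only [tieScore_add_tieScore_swap, sum_const, nsmul_eq_mul, mul_one] at hsymm
  linarith

lemma aurocHalf_self {S : Finset T} (hS : S.Nonempty) : aurocHalf U S S = 1 / 2 := by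
  have hcard : (#S : ℝ) ≠ 0 := by exact_mod_cast hS.card_ne_zero
  rw [aurocHalf_eq_sum_tieScore, sum_sum_tieScore_self]
  field_simp

lemma aurocHalf_eq_of_bijOn {O I J : Finset T} {φ : T → T} (hφ : Set.BijOn φ J I)
    (hU : ∀ y ∈ J, U (φ y) = U y) : aurocHalf U O I = aurocHalf U O J := by
  have hinner : ∀ x ∈ O,
      ∑ y ∈ I, tieScore (U x) (U y) = ∑ y ∈ J, tieScore (U x) (U y) := fun x _ =>
    (sum_nbij φ hφ.mapsTo hφ.injOn hφ.surjOn fun y hy => by rw [hU y hy]).symm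
  rw [aurocHalf_eq_sum_tieScore, aurocHalf_eq_sum_tieScore, sum_congr rfl hinner,
    hφ.finsetCard_eq]

end

theorem relation_agnostic_aurocHalf_eq_half_general
    {E R : Type*} (freq : E → ℕ) (g : ℕ → ℝ) (f : ℝ × ℝ → ℝ)
    (U : E × R × E → ℝ)
    (hU : ∀ h r t, U (h, r, t) = f (g (freq h), g (freq t)))
    (Dnovel DID : Finset (E × R × E))
    (hnovel : Dnovel.Nonempty)
    (φ : E × R × E → E × R × E)
    (hbij : Set.BijOn φ ↑Dnovel ↑DID)
    (hfreq : ∀ x ∈ Dnovel, freq (φ x).1 = freq x.1 ∧ freq (φ x).2.2 = freq x.2.2) :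
    aurocHalf U Dnovel DID = 1 / 2 := by
  have hU' : ∀ x, U x = f (g (freq x.1), g (freq x.2.2)) := fun ⟨h, r, t⟩ => hU h r t
  have hUφ : ∀ x ∈ Dnovel, U (φ x) = U x := fun x hx => by
    rw [hU', hU' x, (hfreq x hx).1, (hfreq x hx).2]
  rw [aurocHalf_eq_of_bijOn U hbij hUφ, aurocHalf_self U hnovel]

/-- A relation-agnostic uncertainty estimator
`U(h,r,t) = f(g(freq h), g(freq t))` achieves tie-corrected AUROC exactly `1/2`
on novel contexts whenever there is a frequency-preserving bijection from
`D_novel` onto `D_ID`. -/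
theorem relation_agnostic_aurocHalf_eq_half
    {E R : Type*} (freq : E → ℕ) (g : ℕ → ℝ) (f : ℝ × ℝ → ℝ)
    (U : E × R × E → ℝ)
    (hU : ∀ h r t, U (h, r, t) = f (g (freq h), g (freq t)))
    (Dnovel DID : Finset (E × R × E))
    (hnovel : Dnovel.Nonempty) (hid : DID.Nonempty)
    (φ : E × R × E → E × R × E)
    (hbij : Set.BijOn φ ↑Dnovel ↑DID)
    (hfreq : ∀ x ∈ Dnovel, freq (φ x).1 = freq x.1 ∧ freq (φ x).2.2 = freq x.2.2) :
    aurocHalf U Dnovel DID = 1 / 2 :=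
  relation_agnostic_aurocHalf_eq_half_general freq g f U hU Dnovel DID hnovel φ hbij hfreq
end

section
/- Let T be a type, U : T → ℝ, and let O and I be finite nonempty Finsets of T with |O| = |I|. If there exists a bijection φ : O → I with U(x) ≤ U(φ(x)) for all x ∈ O, then AUROC⁎(U, O, I) ≤ 1/2 − 1/(2·|I|); in particular the strict AUROC of any such estimator is strictly below 1/2. -/
/-!
Moving each `x ∈ O` to `φ x ∈ I` turns every strictly correctly ordered pair `(x, y)` into one
`(φ x, y)` of `I × I`, injectively, so `AUROC⁎(U, O, I) ≤ AUROC⁎(U, I, I)`. In `I × I` a pair and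
its swap are never both strictly ordered and the diagonal never is, so at most `(n² - n) / 2` of the
`n²` pairs are, where `n = |I|`.
-/

open Finset

noncomputable def strictPairs {T : Type*} (U : T → ℝ) (O I : Finset T) : Finset (T × T) :=
  {p ∈ O ×ˢ I | U p.2 < U p.1}

section

variable {T : Type*} (U : T → ℝ)

theorem aurocStrict_eq_card_strictPairs_div (O I : Finset T) :
    aurocStrict U O I = #(strictPairs U O I) / (#O * #I) := by
  rw [aurocStrict, ← sum_product' (f := fun x y => if U x > U y then (1 : ℝ) else 0), sum_boole,
    one_div_mul_eq_div]
  rfl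

theorem card_strictPairs_le_of_mapsTo_of_injOn {O I : Finset T} {φ : T → T}
    (hmaps : Set.MapsTo φ O I) (hinj : Set.InjOn φ O) (hle : ∀ x ∈ O, U x ≤ U (φ x)) :
    #(strictPairs U O I) ≤ #(strictPairs U I I) := by
  refine card_le_card_of_injOn (fun p => (φ p.1, p.2)) ?_ ?_
  · intro p hp
    simp only [strictPairs, mem_coe, mem_filter, mem_product] at hp ⊢
    exact ⟨⟨hmaps hp.1.1, hp.1.2⟩, hp.2.trans_le (hle _ hp.1.1)⟩
  · intro p hp q hq hpq
    simp only [strictPairs, mem_coe, mem_filter, mem_product, Prod.mk.injEq] at hp hq hpq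
    exact Prod.ext (hinj hp.1.1 hq.1.1 hpq.1) hpq.2

theorem two_mul_card_strictPairs_self_add_card_le (s : Finset T) :
    2 * #(strictPairs U s s) + #s ≤ #s * #s := by
  classical
  set A := strictPairs U s s
  have hswap : #(A.image Prod.swap) = #A := card_image_of_injective _ Prod.swap_injective
  have hA : Disjoint A (A.image Prod.swap) := by
    simp only [disjoint_left, mem_image, A, strictPairs, mem_filter]
    rintro p hp ⟨q, hq, rfl⟩
    exact lt_asymm hp.2 hq.2
  have hdiag : Disjoint (A ∪ A.image Prod.swap) s.diag := by
    simp only [disjoint_left, mem_union, mem_image, A, strictPairs, mem_filter, mem_diag]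
    rintro p (hp | ⟨q, hq, rfl⟩) hd
    · exact hp.2.ne (congrArg U hd.2.symm)
    · exact hq.2.ne (congrArg U hd.2)
  have hsub : A ∪ A.image Prod.swap ∪ s.diag ⊆ s ×ˢ s := by
    refine union_subset (union_subset (filter_subset _ _) ?_) ?_
    · rintro _ hp
      obtain ⟨q, hq, rfl⟩ := mem_image.mp hp
      exact mem_product.mpr (mem_product.mp (mem_filter.mp hq).1).symm
    · intro p hp
      obtain ⟨hp₁, hp₁₂⟩ := mem_diag.mp hp
      exact mem_product.mpr ⟨hp₁, hp₁₂ ▸ hp₁⟩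
  have := card_le_card hsub
  rw [card_union_of_disjoint hdiag, card_union_of_disjoint hA, hswap, diag_card,
    card_product] at this
  omega

theorem div_le_half_sub_of_two_mul_add_le {c n : ℕ} (h : 2 * c + n ≤ n * n) :
    (c : ℝ) / (n * n) ≤ 1 / 2 - 1 / (2 * n) := by
  rcases n.eq_zero_or_pos with rfl | hn
  · simp -- the right side is `1 / 2` since `1 / 0 = 0`
  have hn' : (0 : ℝ) < n := by exact_mod_cast hn
  have h' : (2 * c + n : ℝ) ≤ n * n := by exact_mod_cast h
  rw [div_le_iff₀ (by positivity)]
  field_simp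
  linarith

theorem aurocStrict_self_le (s : Finset T) :
    aurocStrict U s s ≤ 1 / 2 - 1 / (2 * (#s : ℝ)) := by
  rw [aurocStrict_eq_card_strictPairs_div]
  exact div_le_half_sub_of_two_mul_add_le (two_mul_card_strictPairs_self_add_card_le U s)

theorem aurocStrict_le_aurocStrict_self_of_bijOn {O I : Finset T} {φ : T → T}
    (hbij : Set.BijOn φ O I) (hle : ∀ x ∈ O, U x ≤ U (φ x)) :
    aurocStrict U O I ≤ aurocStrict U I I := by
  have hcard : #O = #I := card_nbij φ hbij.mapsTo hbij.injOn hbij.surjOn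
  rw [aurocStrict_eq_card_strictPairs_div, aurocStrict_eq_card_strictPairs_div, hcard]
  have hpairs := card_strictPairs_le_of_mapsTo_of_injOn U hbij.mapsTo hbij.injOn hle
  gcongr

end

theorem aurocStrict_le_of_dominating_bijection_general
    {T : Type*} (U : T → ℝ) (O I : Finset T)
    (φ : T → T) (hbij : Set.BijOn φ ↑O ↑I)
    (hle : ∀ x ∈ O, U x ≤ U (φ x)) :
    aurocStrict U O I ≤ 1 / 2 - 1 / (2 * (I.card : ℝ)) :=
  (aurocStrict_le_aurocStrict_self_of_bijOn U hbij hle).trans (aurocStrict_self_le U I)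

/-- If `|O| = |I|` and there is a bijection `φ : O → I` with
`U x ≤ U (φ x)` for all `x ∈ O`, then the strict AUROC is at most
`1/2 − 1/(2·|I|)`, in particular strictly below `1/2`. -/
theorem aurocStrict_le_of_dominating_bijection
    {T : Type*} (U : T → ℝ) (O I : Finset T)
    (hO : O.Nonempty) (hI : I.Nonempty) (hcard : O.card = I.card)
    (φ : T → T) (hbij : Set.BijOn φ ↑O ↑I)
    (hle : ∀ x ∈ O, U x ≤ U (φ x)) :
    aurocStrict U O I ≤ 1 / 2 - 1 / (2 * (I.card : ℝ)) :=
  aurocStrict_le_of_dominating_bijection_general U O I φ hbij hle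
end

section
/- Let T be a type, U : T → ℝ, δ ≥ 0, and let O and I be finite nonempty Finsets of T with |O| = |I|. If there exists a bijection φ : O → I with U(x) ≤ U(φ(x)) + δ for all x ∈ O, then AUROC⁎(U, O, I) ≤ 1/2 + (1/|I|²) · |{(a, b) ∈ I × I : 0 ≤ U(b) − U(a) < δ}|, i.e. the strict AUROC exceeds 1/2 by at most the fraction of in-distribution score pairs that are δ-close in the relevant direction. -/
open Finset

/-!
Transport each out-of-distribution score `U x` to its partner `U (φ x) ≥ U x - δ`. A pair
`(x, y)` with `U y < U x` then either satisfies `U y < U (φ x)` or is a `δ`-close pair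
`U (φ x) ≤ U y < U (φ x) + δ` of in-distribution scores. After reindexing by the bijection `φ`,
the first kind of pairs are the strictly ordered pairs of `I × I`, of which there are at most
`|I|² / 2`, since a pair and its reverse are never both strictly ordered.
-/

lemma ite_lt_le_ite_lt_add_ite_close {G : Type*} [AddCommGroup G] [LinearOrder G]
    [IsOrderedAddMonoid G] {a b c δ : G} (h : a ≤ c + δ) :
    (if b < a then (1 : ℝ) else 0) ≤
      (if b < c then 1 else 0) + (if 0 ≤ b - c ∧ b - c < δ then 1 else 0) := by
  split_ifs <;> grind

lemma sum_sum_ite_lt_le_card_sq_div_two {α β : Type*} [LinearOrder β] (s : Finset α)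
    (f : α → β) :
    ∑ a ∈ s, ∑ b ∈ s, (if f b < f a then (1 : ℝ) else 0) ≤ (s.card : ℝ) ^ 2 / 2 := by
  have hswap : ∑ a ∈ s, ∑ b ∈ s, (if f b < f a then (1 : ℝ) else 0) =
      ∑ a ∈ s, ∑ b ∈ s, (if f a < f b then (1 : ℝ) else 0) := sum_comm
  have hboth : ∑ a ∈ s, ∑ b ∈ s,
      ((if f b < f a then (1 : ℝ) else 0) + (if f a < f b then 1 else 0)) ≤
        ∑ _a ∈ s, ∑ _b ∈ s, (1 : ℝ) := by
    gcongr with a _ b _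
    split_ifs with hba hab
    · exact absurd (hba.trans hab) (lt_irrefl _)
    all_goals norm_num
  simp only [sum_add_distrib, ← hswap, sum_const, nsmul_eq_mul, mul_one] at hboth
  linarith

lemma card_filter_product_eq_sum_sum_ite {α β : Type*} (s : Finset α) (t : Finset β)
    (p : α → β → Prop)
    [DecidableRel p] :
    (((s ×ˢ t).filter (fun q => p q.1 q.2)).card : ℝ) =
      ∑ a ∈ s, ∑ b ∈ t, if p a b then (1 : ℝ) else 0 := by
  rw [← sum_product', sum_boole]

lemma one_div_mul_le_half_add_of_le {n S C : ℝ} (h : S ≤ n ^ 2 / 2 + C) :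
    1 / (n * n) * S ≤ 1 / 2 + 1 / n ^ 2 * C := by
  rcases eq_or_ne n 0 with rfl | hn
  · norm_num
  calc 1 / (n * n) * S ≤ 1 / n ^ 2 * (n ^ 2 / 2 + C) := by
        rw [← sq]; gcongr
    _ = 1 / 2 + 1 / n ^ 2 * C := by field_simp

theorem aurocStrict_le_half_add_close_pairs_general
    {T : Type*} (U : T → ℝ) (δ : ℝ)
    (O I : Finset T)
    (φ : T → T) (hbij : Set.BijOn φ ↑O ↑I)
    (hle : ∀ x ∈ O, U x ≤ U (φ x) + δ) :
    aurocStrict U O I ≤ 1 / 2 +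
      (1 / ((I.card : ℝ) ^ 2)) *
        (((I ×ˢ I).filter (fun p => 0 ≤ U p.2 - U p.1 ∧ U p.2 - U p.1 < δ)).card : ℝ) := by
  have hcard : O.card = I.card := card_nbij φ hbij.mapsTo hbij.injOn hbij.surjOn
  have hsum : ∑ x ∈ O, ∑ y ∈ I, (if U x > U y then (1 : ℝ) else 0) ≤ (I.card : ℝ) ^ 2 / 2 +
      (((I ×ˢ I).filter (fun p => 0 ≤ U p.2 - U p.1 ∧ U p.2 - U p.1 < δ)).card : ℝ) :=
    calc _ ≤ ∑ x ∈ O, ∑ y ∈ I, ((if U y < U (φ x) then (1 : ℝ) else 0) +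
            (if 0 ≤ U y - U (φ x) ∧ U y - U (φ x) < δ then 1 else 0)) :=
          sum_le_sum fun x hx => sum_le_sum fun _ _ => ite_lt_le_ite_lt_add_ite_close (hle x hx)
      _ = ∑ a ∈ I, ∑ y ∈ I, ((if U y < U a then (1 : ℝ) else 0) +
            (if 0 ≤ U y - U a ∧ U y - U a < δ then 1 else 0)) :=
          sum_nbij φ hbij.mapsTo hbij.injOn hbij.surjOn fun _ _ => rfl
      _ ≤ _ := by
          rw [card_filter_product_eq_sum_sum_ite I I (fun a b => 0 ≤ U b - U a ∧ U b - U a < δ)]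
          simp only [sum_add_distrib]
          gcongr
          exact sum_sum_ite_lt_le_card_sq_div_two I U
  rw [aurocStrict, hcard]
  exact one_div_mul_le_half_add_of_le hsum

/-- If `|O| = |I|` and there is a bijection `φ : O → I` with
`U x ≤ U (φ x) + δ` for all `x ∈ O` (`δ ≥ 0`), then the strict AUROC exceeds
`1/2` by at most the fraction of in-distribution pairs `(a, b) ∈ I × I` with
`0 ≤ U b − U a < δ`. -/
theorem aurocStrict_le_half_add_close_pairs
    {T : Type*} [DecidableEq T] (U : T → ℝ) (δ : ℝ) (hδ : 0 ≤ δ)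
    (O I : Finset T)
    (hO : O.Nonempty) (hI : I.Nonempty) (hcard : O.card = I.card)
    (φ : T → T) (hbij : Set.BijOn φ ↑O ↑I)
    (hle : ∀ x ∈ O, U x ≤ U (φ x) + δ) :
    aurocStrict U O I ≤ 1 / 2 +
      (1 / ((I.card : ℝ) ^ 2)) *
        (((I ×ˢ I).filter (fun p => 0 ≤ U p.2 - U p.1 ∧ U p.2 - U p.1 < δ)).card : ℝ) :=
  aurocStrict_le_half_add_close_pairs_general U δ O I φ hbij hle
end

section
/- Let E and R be types, c : E × R → {0, 1} a coverage function, and U_str(h, r, t) = 2 − c(h, r) − c(t, r) the structural uncertainty. Let D_ID be a finite nonempty set of triples such that every (h, r, t) ∈ D_ID has c(h, r) = 1 and c(t, r) = 1, and let D_emerge be a finite nonempty set of triples. Let ρ = |{x ∈ D_emerge : U_str(x) = 0}| / |D_emerge| be the fraction of emerging-entity triples with full coverage. Then AUROC⁎(U_str, D_emerge, D_ID) = 1 − ρ; in particular, if ρ > 0 then structural uncertainty achieves strict AUROC strictly less than 1 on emerging entities. -/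
/-! Every in-distribution triple has structural uncertainty `0`, the least value `U_str` can
take, so an emerging triple ranks strictly above all of them when its uncertainty is positive
and above none of them when it is `0`. -/

open Finset

section AUROC

variable {T : Type*} {U : T → ℝ} {O I : Finset T} {m : ℝ}

lemma aurocStrict_eq_card_filter_lt_div (hI : I.Nonempty) (hU : ∀ y ∈ I, U y = m) :
    aurocStrict U O I = #(O.filter (fun x => m < U x)) / #O := by
  have hrow : ∀ x ∈ O, ∑ y ∈ I, (if U x > U y then (1 : ℝ) else 0)
      = if m < U x then (#I : ℝ) else 0 := by
    intro x _
    rw [sum_congr rfl fun y hy => by rw [hU y hy]]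
    split_ifs <;> simp_all
  have hI_pos : (0 : ℝ) < #I := by exact_mod_cast hI.card_pos
  rw [aurocStrict, sum_congr rfl hrow, sum_ite, sum_const_zero, sum_const, nsmul_eq_mul]
  field_simp
  ring

lemma card_filter_lt_div_eq_one_sub (hO : O.Nonempty) (hU : ∀ x ∈ O, m ≤ U x) :
    (#(O.filter (fun x => m < U x)) : ℝ) / #O = 1 - #(O.filter (fun x => U x = m)) / #O := by
  have hties : O.filter (fun x => U x = m) = O.filter (fun x => ¬ m < U x) :=
    filter_congr fun x hx => by rw [not_lt, (hU x hx).ge_iff_eq, eq_comm]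
  have hsplit : #(O.filter (fun x => m < U x)) + #(O.filter (fun x => U x = m)) = #O := by
    rw [hties, card_filter_add_card_filter_not]
  have hO_pos : (0 : ℝ) < #O := by exact_mod_cast hO.card_pos
  rw [eq_sub_iff_add_eq, ← add_div, div_eq_one_iff_eq hO_pos.ne']
  exact_mod_cast hsplit

lemma aurocStrict_eq_one_sub_of_const_min (hO : O.Nonempty) (hI : I.Nonempty)
    (hI_eq : ∀ y ∈ I, U y = m) (hO_ge : ∀ x ∈ O, m ≤ U x) :
    aurocStrict U O I = 1 - #(O.filter (fun x => U x = m)) / #O := by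
  rw [aurocStrict_eq_card_filter_lt_div hI hI_eq, card_filter_lt_div_eq_one_sub hO hO_ge]

end AUROC

open Classical in
/-- With binary coverage `c : E × R → {0,1}` and structural
uncertainty `U_str(h,r,t) = 2 − c(h,r) − c(t,r)`, if every ID triple is fully
covered and `ρ` is the fraction of emerging triples with `U_str = 0`, then
`AUROC⁎(U_str, D_emerge, D_ID) = 1 − ρ`; in particular if `ρ > 0` the strict
AUROC is strictly below `1`. -/
theorem structural_aurocStrict_emerge
    {E R : Type*} (c : E × R → ℝ) (hc : ∀ p, c p = 0 ∨ c p = 1)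
    (Ustr : E × R × E → ℝ)
    (hUstr : ∀ h r t, Ustr (h, r, t) = 2 - c (h, r) - c (t, r))
    (DID Demerge : Finset (E × R × E))
    (hid : DID.Nonempty) (hem : Demerge.Nonempty)
    (hcov : ∀ x ∈ DID, c (x.1, x.2.1) = 1 ∧ c (x.2.2, x.2.1) = 1)
    (ρ : ℝ)
    (hρ : ρ = ((Demerge.filter (fun x => Ustr x = 0)).card : ℝ) / (Demerge.card : ℝ)) :
    aurocStrict Ustr Demerge DID = 1 - ρ ∧
      (ρ > 0 → aurocStrict Ustr Demerge DID < 1) := by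
  have hID_zero : ∀ y ∈ DID, Ustr y = 0 := by
    rintro ⟨h, r, t⟩ hy
    obtain ⟨hh, ht⟩ := hcov _ hy
    rw [hUstr, hh, ht]
    norm_num
  have hnonneg : ∀ x ∈ Demerge, 0 ≤ Ustr x := by
    rintro ⟨h, r, t⟩ -
    have hle : ∀ p, c p ≤ 1 := fun p => by rcases hc p with hp | hp <;> norm_num [hp]
    rw [hUstr]
    linarith [hle (h, r), hle (t, r)]
  have hauroc : aurocStrict Ustr Demerge DID = 1 - ρ := by
    rw [hρ]
    exact aurocStrict_eq_one_sub_of_const_min hem hid hID_zero hnonneg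
  exact ⟨hauroc, fun hρ_pos => by linarith⟩
end

section
/- Let E and R be types, freq : E → ℕ, g : ℕ → ℝ, c : E × R → {0, 1}, U_sem(h, r, t) = (g(freq h) + g(freq t))/2, and U_str(h, r, t) = 2 − c(h, r) − c(t, r). Let D_ID, D_emerge, D_novel be finite sets of triples with D_ID nonempty and D_emerge ∪ D_novel nonempty. Assume: (A2) every (h, r, t) ∈ D_ID has c(h, r) = 1 and c(t, r) = 1; every (h, r, t) ∈ D_novel has c(h, r) = 0 or c(t, r) = 0; (A4) there is Δ with 0 ≤ Δ < 1 such that U_sem(y) − U_sem(x) ≤ Δ for all x ∈ D_novel and y ∈ D_ID; (A6) U_sem(x) > U_sem(y) for all x ∈ D_emerge and y ∈ D_ID. Then for every α with 0 < α < 1/(1 + Δ), the combined estimator U_comb = α·U_sem + (1 − α)·U_str satisfies AUROC⁎(U_comb, D_emerge ∪ D_novel, D_ID) = 1. -/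
open Finset

/-! The combined score separates every out-of-distribution triple from every in-distribution one.
In-distribution triples have structural uncertainty `0`. An emerging triple wins on the semantic
part and loses nothing on the structural part, since `1 - α ≥ 0`. A novel triple has structural
uncertainty at least `1`, which outweighs a semantic deficit of at most `Δ` exactly when
`α * Δ < 1 - α`, i.e. `α < 1 / (1 + Δ)`. -/

theorem aurocStrict_eq_one_of_forall_lt {T : Type*} {U : T → ℝ} {O I : Finset T}
    (hO : O.Nonempty) (hI : I.Nonempty) (hUOI : ∀ x ∈ O, ∀ y ∈ I, U y < U x) :
    aurocStrict U O I = 1 := by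
  have hrow : ∀ x ∈ O, ∑ y ∈ I, (if U x > U y then (1 : ℝ) else 0) = I.card := fun x hx => by
    rw [sum_congr rfl fun y hy => if_pos (hUOI x hx y hy)]
    simp
  have hO' : (O.card : ℝ) ≠ 0 := by exact_mod_cast hO.card_ne_zero
  have hI' : (I.card : ℝ) ≠ 0 := by exact_mod_cast hI.card_ne_zero
  rw [aurocStrict, sum_congr rfl hrow, sum_const, nsmul_eq_mul]
  field_simp

theorem mul_add_one_sub_mul_lt_of_lt_of_le {α a a' b b' : ℝ} (hα0 : 0 < α) (hα1 : α ≤ 1)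
    (ha : a < a') (hb : b ≤ b') : α * a + (1 - α) * b < α * a' + (1 - α) * b' := by
  have := mul_lt_mul_of_pos_left ha hα0
  have := mul_le_mul_of_nonneg_left hb (sub_nonneg.mpr hα1)
  linarith

theorem mul_add_one_sub_mul_lt_of_sub_le {α Δ a a' b b' : ℝ} (hα0 : 0 ≤ α) (hα1 : α ≤ 1)
    (hαΔ : α * (1 + Δ) < 1) (ha : a - a' ≤ Δ) (hb : b + 1 ≤ b') :
    α * a + (1 - α) * b < α * a' + (1 - α) * b' := by
  have := mul_le_mul_of_nonneg_left ha hα0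
  have := mul_le_mul_of_nonneg_left (le_sub_iff_add_le'.mpr hb) (sub_nonneg.mpr hα1)
  linarith

theorem combined_aurocStrict_eq_one_general
    {E R : Type*} [DecidableEq E] [DecidableEq R]
    (c : E × R → ℝ) (hc : ∀ p, c p = 0 ∨ c p = 1)
    (Usem Ustr : E × R × E → ℝ)
    (hUstr : ∀ h r t, Ustr (h, r, t) = 2 - c (h, r) - c (t, r))
    (DID Demerge Dnovel : Finset (E × R × E))
    (hid : DID.Nonempty) (hood : (Demerge ∪ Dnovel).Nonempty)
    (hA2 : ∀ x ∈ DID, c (x.1, x.2.1) = 1 ∧ c (x.2.2, x.2.1) = 1)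
    (hA2' : ∀ x ∈ Dnovel, c (x.1, x.2.1) = 0 ∨ c (x.2.2, x.2.1) = 0)
    (Δ : ℝ) (hΔ0 : 0 ≤ Δ)
    (hA4 : ∀ x ∈ Dnovel, ∀ y ∈ DID, Usem y - Usem x ≤ Δ)
    (hA6 : ∀ x ∈ Demerge, ∀ y ∈ DID, Usem x > Usem y)
    (α : ℝ) (hα0 : 0 < α) (hα1 : α < 1 / (1 + Δ)) :
    aurocStrict (fun x => α * Usem x + (1 - α) * Ustr x) (Demerge ∪ Dnovel) DID = 1 := by
  have hαΔ : α * (1 + Δ) < 1 := (lt_div_iff₀ (by linarith)).mp hα1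
  have hα_le_one : α ≤ 1 := by nlinarith
  have hc_le_one : ∀ p, c p ≤ 1 := fun p => by rcases hc p with h | h <;> simp [h]
  have hID : ∀ y ∈ DID, Ustr y = 0 := by
    rintro ⟨h, r, t⟩ hy
    obtain ⟨hh, ht⟩ := hA2 _ hy
    rw [hUstr, hh, ht]
    norm_num
  refine aurocStrict_eq_one_of_forall_lt hood hid fun ⟨h, r, t⟩ hx y hy => ?_
  rw [hID y hy]
  rcases mem_union.mp hx with hx | hx
  · refine mul_add_one_sub_mul_lt_of_lt_of_le hα0 hα_le_one (hA6 _ hx y hy) ?_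
    rw [hUstr]
    linarith [hc_le_one (h, r), hc_le_one (t, r)]
  · refine mul_add_one_sub_mul_lt_of_sub_le hα0.le hα_le_one hαΔ (hA4 _ hx y hy) ?_
    rw [hUstr]
    rcases hA2' _ hx with h0 | h0 <;> linarith [hc_le_one (h, r), hc_le_one (t, r)]

/-- Under (A2) full ID coverage and missing novel coverage,
(A4) bounded semantic gap `Δ < 1`, and (A6) semantic separation of emerging
entities, the combined estimator `α·U_sem + (1 − α)·U_str` with
`0 < α < 1/(1 + Δ)` achieves strict AUROC `1` on `D_emerge ∪ D_novel`. -/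
theorem combined_aurocStrict_eq_one
    {E R : Type*} [DecidableEq E] [DecidableEq R]
    (freq : E → ℕ) (g : ℕ → ℝ)
    (c : E × R → ℝ) (hc : ∀ p, c p = 0 ∨ c p = 1)
    (Usem Ustr : E × R × E → ℝ)
    (hUsem : ∀ h r t, Usem (h, r, t) = (g (freq h) + g (freq t)) / 2)
    (hUstr : ∀ h r t, Ustr (h, r, t) = 2 - c (h, r) - c (t, r))
    (DID Demerge Dnovel : Finset (E × R × E))
    (hid : DID.Nonempty) (hood : (Demerge ∪ Dnovel).Nonempty)
    (hA2 : ∀ x ∈ DID, c (x.1, x.2.1) = 1 ∧ c (x.2.2, x.2.1) = 1)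
    (hA2' : ∀ x ∈ Dnovel, c (x.1, x.2.1) = 0 ∨ c (x.2.2, x.2.1) = 0)
    (Δ : ℝ) (hΔ0 : 0 ≤ Δ) (hΔ1 : Δ < 1)
    (hA4 : ∀ x ∈ Dnovel, ∀ y ∈ DID, Usem y - Usem x ≤ Δ)
    (hA6 : ∀ x ∈ Demerge, ∀ y ∈ DID, Usem x > Usem y)
    (α : ℝ) (hα0 : 0 < α) (hα1 : α < 1 / (1 + Δ)) :
    aurocStrict (fun x => α * Usem x + (1 - α) * Ustr x) (Demerge ∪ Dnovel) DID = 1 :=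
  combined_aurocStrict_eq_one_general c hc Usem Ustr hUstr DID Demerge Dnovel hid hood hA2 hA2' Δ
    hΔ0 hA4 hA6 α hα0 hα1
end

section
/- Under the hypotheses of the combined-estimator theorem — (A2) every triple in D_ID is fully covered; every triple in D_novel has missing coverage; (A4) U_sem(y) − U_sem(x) ≤ Δ < 1 for all x ∈ D_novel, y ∈ D_ID; (A6) U_sem(x) > U_sem(y) for all x ∈ D_emerge, y ∈ D_ID; and 0 < α < 1/(1 + Δ) — assume additionally that D_emerge and D_novel are nonempty, that there exists x₀ ∈ D_emerge with U_str(x₀) = 0, and that there exist x₁ ∈ D_novel and y₁ ∈ D_ID with U_sem(x₁) ≤ U_sem(y₁). Then, writing O = D_emerge ∪ D_novel, the combined estimator U_comb = α·U_sem + (1 − α)·U_str strictly dominates both single signals: AUROC⁎(U_comb, O, D_ID) = 1 > AUROC⁎(U_str, O, D_ID) and AUROC⁎(U_comb, O, D_ID) = 1 > AUROC⁎(U_sem, O, D_ID). -/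
open Finset

/-!
On the in-distribution triples the structural score vanishes, so the combined score there is
`α · U_sem`. An emerging triple beats it through its strictly larger semantic score, because its
structural score is nonnegative; a novel triple beats it through its structural score `≥ 1`, which
outweighs a semantic deficit of at most `Δ` as soon as `α (1 + Δ) < 1`. Hence the combined score
separates every pair and its AUROC is `1`, while the witnesses `x₀` and `x₁` give a pair that each
single score fails to separate.
-/

section Auroc

variable {T : Type*} (U : T → ℝ)

lemma aurocStrict_eq_card_filter_div (O I : Finset T) :
    aurocStrict U O I = (#{p ∈ O ×ˢ I | U p.1 > U p.2} : ℝ) / #(O ×ˢ I) := by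
  rw [aurocStrict, ← sum_product' (f := fun x y => if U x > U y then (1 : ℝ) else 0), sum_boole,
    card_product, Nat.cast_mul, one_div_mul_eq_div]

variable {O I : Finset T}

lemma aurocStrict_eq_one (hO : O.Nonempty) (hI : I.Nonempty)
    (h : ∀ x ∈ O, ∀ y ∈ I, U x > U y) : aurocStrict U O I = 1 := by
  rw [aurocStrict_eq_card_filter_div, filter_true_of_mem fun p hp => h _ (mem_product.1 hp).1 _
    (mem_product.1 hp).2]
  exact div_self (Nat.cast_ne_zero.2 (hO.product hI).card_pos.ne')

lemma aurocStrict_lt_one {x₀ y₀ : T} (hx₀ : x₀ ∈ O) (hy₀ : y₀ ∈ I) (h : U x₀ ≤ U y₀) :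
    aurocStrict U O I < 1 := by
  have hmem : (x₀, y₀) ∈ O ×ˢ I := mem_product.2 ⟨hx₀, hy₀⟩
  have hssub : {p ∈ O ×ˢ I | U p.1 > U p.2} ⊂ O ×ˢ I :=
    filter_ssubset.2 ⟨(x₀, y₀), hmem, not_lt.2 h⟩
  rw [aurocStrict_eq_card_filter_div, div_lt_one (by exact_mod_cast card_pos.2 ⟨_, hmem⟩)]
  exact_mod_cast card_lt_card hssub

end Auroc

section StructuralScore

variable {E R : Type*} {c : E × R → ℝ} {Ustr : E × R × E → ℝ}
  (hUstr : ∀ h r t, Ustr (h, r, t) = 2 - c (h, r) - c (t, r))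
include hUstr

lemma Ustr_nonneg (hc : ∀ p, c p ≤ 1) (x : E × R × E) : 0 ≤ Ustr x := by
  obtain ⟨h, r, t⟩ := x
  linarith [hUstr h r t, hc (h, r), hc (t, r)]

lemma Ustr_eq_zero_of_covered {x : E × R × E}
    (hx : c (x.1, x.2.1) = 1 ∧ c (x.2.2, x.2.1) = 1) : Ustr x = 0 := by
  obtain ⟨h, r, t⟩ := x
  rw [hUstr, hx.1, hx.2]
  norm_num

lemma one_le_Ustr_of_uncovered (hc : ∀ p, c p ≤ 1) {x : E × R × E}
    (hx : c (x.1, x.2.1) = 0 ∨ c (x.2.2, x.2.1) = 0) : 1 ≤ Ustr x := by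
  obtain ⟨h, r, t⟩ := x
  rcases hx with h0 | h0 <;> linarith [hUstr h r t, hc (h, r), hc (t, r)]

end StructuralScore

section CombinedScore

variable {α s s' t : ℝ}

lemma mul_lt_mix_of_lt (hα0 : 0 < α) (hα1 : α ≤ 1) (hs : s' < s) (ht : 0 ≤ t) :
    α * s' < α * s + (1 - α) * t := by
  nlinarith [mul_nonneg (sub_nonneg.2 hα1) ht]

lemma mul_lt_mix_of_sub_le {Δ : ℝ} (hα0 : 0 < α) (hα1 : α ≤ 1) (hαΔ : α * (1 + Δ) < 1)
    (hs : s' - s ≤ Δ) (ht : 1 ≤ t) : α * s' < α * s + (1 - α) * t := by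
  nlinarith [mul_le_mul_of_nonneg_left hs hα0.le, mul_le_mul_of_nonneg_left ht (sub_nonneg.2 hα1)]

end CombinedScore

theorem combined_strictly_dominates_general
    {E R : Type*} [DecidableEq E] [DecidableEq R]
    (c : E × R → ℝ) (hc : ∀ p, c p = 0 ∨ c p = 1)
    (Usem Ustr : E × R × E → ℝ)
    (hUstr : ∀ h r t, Ustr (h, r, t) = 2 - c (h, r) - c (t, r))
    (DID Demerge Dnovel : Finset (E × R × E))
    (hA2 : ∀ x ∈ DID, c (x.1, x.2.1) = 1 ∧ c (x.2.2, x.2.1) = 1)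
    (hA2' : ∀ x ∈ Dnovel, c (x.1, x.2.1) = 0 ∨ c (x.2.2, x.2.1) = 0)
    (Δ : ℝ) (hΔ0 : 0 ≤ Δ)
    (hA4 : ∀ x ∈ Dnovel, ∀ y ∈ DID, Usem y - Usem x ≤ Δ)
    (hA6 : ∀ x ∈ Demerge, ∀ y ∈ DID, Usem x > Usem y)
    (α : ℝ) (hα0 : 0 < α) (hα1 : α < 1 / (1 + Δ))
    (hx0 : ∃ x₀ ∈ Demerge, Ustr x₀ = 0)
    (hx1 : ∃ x₁ ∈ Dnovel, ∃ y₁ ∈ DID, Usem x₁ ≤ Usem y₁) :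
    aurocStrict (fun x => α * Usem x + (1 - α) * Ustr x) (Demerge ∪ Dnovel) DID = 1 ∧
      aurocStrict Ustr (Demerge ∪ Dnovel) DID <
        aurocStrict (fun x => α * Usem x + (1 - α) * Ustr x) (Demerge ∪ Dnovel) DID ∧
      aurocStrict Usem (Demerge ∪ Dnovel) DID <
        aurocStrict (fun x => α * Usem x + (1 - α) * Ustr x) (Demerge ∪ Dnovel) DID := by
  obtain ⟨x₀, hx₀, hx₀str⟩ := hx0
  obtain ⟨x₁, hx₁, y₁, hy₁, hx₁sem⟩ := hx1
  have hαΔ : α * (1 + Δ) < 1 := (lt_div_iff₀ (by linarith)).1 hα1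
  have hα_le : α ≤ 1 := by nlinarith
  have hc_le : ∀ p, c p ≤ 1 := fun p => (hc p).elim (fun h => h ▸ zero_le_one) le_of_eq
  have hstrID : ∀ y ∈ DID, Ustr y = 0 := fun y hy => Ustr_eq_zero_of_covered hUstr (hA2 y hy)
  have hsep : ∀ x ∈ Demerge ∪ Dnovel, ∀ y ∈ DID,
      α * Usem x + (1 - α) * Ustr x > α * Usem y + (1 - α) * Ustr y := by
    intro x hx y hy
    rw [hstrID y hy, mul_zero, add_zero]
    rcases mem_union.1 hx with hx | hx
    · exact mul_lt_mix_of_lt hα0 hα_le (hA6 x hx y hy) (Ustr_nonneg hUstr hc_le x)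
    · exact mul_lt_mix_of_sub_le hα0 hα_le hαΔ (hA4 x hx y hy)
        (one_le_Ustr_of_uncovered hUstr hc_le (hA2' x hx))
  rw [aurocStrict_eq_one _ ⟨x₀, mem_union_left _ hx₀⟩ ⟨y₁, hy₁⟩ hsep]
  exact ⟨rfl, aurocStrict_lt_one _ (mem_union_left _ hx₀) hy₁ (by rw [hx₀str, hstrID y₁ hy₁]),
    aurocStrict_lt_one _ (mem_union_right _ hx₁) hy₁ hx₁sem⟩

/-- Under the hypotheses of the combined-estimator theorem,
if moreover some emerging triple has full coverage (`U_str x₀ = 0`) and some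
novel triple has semantic uncertainty not above some ID triple's, then the
combined estimator strictly dominates both single signals on
`O = D_emerge ∪ D_novel`. -/
theorem combined_strictly_dominates
    {E R : Type*} [DecidableEq E] [DecidableEq R]
    (freq : E → ℕ) (g : ℕ → ℝ)
    (c : E × R → ℝ) (hc : ∀ p, c p = 0 ∨ c p = 1)
    (Usem Ustr : E × R × E → ℝ)
    (hUsem : ∀ h r t, Usem (h, r, t) = (g (freq h) + g (freq t)) / 2)
    (hUstr : ∀ h r t, Ustr (h, r, t) = 2 - c (h, r) - c (t, r))
    (DID Demerge Dnovel : Finset (E × R × E))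
    (hid : DID.Nonempty) (hem : Demerge.Nonempty) (hnov : Dnovel.Nonempty)
    (hA2 : ∀ x ∈ DID, c (x.1, x.2.1) = 1 ∧ c (x.2.2, x.2.1) = 1)
    (hA2' : ∀ x ∈ Dnovel, c (x.1, x.2.1) = 0 ∨ c (x.2.2, x.2.1) = 0)
    (Δ : ℝ) (hΔ0 : 0 ≤ Δ) (hΔ1 : Δ < 1)
    (hA4 : ∀ x ∈ Dnovel, ∀ y ∈ DID, Usem y - Usem x ≤ Δ)
    (hA6 : ∀ x ∈ Demerge, ∀ y ∈ DID, Usem x > Usem y)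
    (α : ℝ) (hα0 : 0 < α) (hα1 : α < 1 / (1 + Δ))
    (hx0 : ∃ x₀ ∈ Demerge, Ustr x₀ = 0)
    (hx1 : ∃ x₁ ∈ Dnovel, ∃ y₁ ∈ DID, Usem x₁ ≤ Usem y₁) :
    aurocStrict (fun x => α * Usem x + (1 - α) * Ustr x) (Demerge ∪ Dnovel) DID = 1 ∧
      aurocStrict Ustr (Demerge ∪ Dnovel) DID <
        aurocStrict (fun x => α * Usem x + (1 - α) * Ustr x) (Demerge ∪ Dnovel) DID ∧
      aurocStrict Usem (Demerge ∪ Dnovel) DID <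
        aurocStrict (fun x => α * Usem x + (1 - α) * Ustr x) (Demerge ∪ Dnovel) DID :=
  combined_strictly_dominates_general c hc Usem Ustr hUstr DID Demerge Dnovel hA2 hA2' Δ hΔ0 hA4 hA6
    α hα0 hα1 hx0 hx1
end
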